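/- Abstract recurrence criterion via product forms: Let (E^{(i)}, m^{(i)}), i = 1, …, N, be measure spaces with symmetric bilinear nonnegative forms 𝓔^{(i)} on subspaces 𝓕^{(i)} ⊆ L²(m^{(i)}). Suppose for each i there is a sequence (u_n^{(i)}) in 𝓕^{(i)} and indices n^{(i)}(k) := inf{ n : 𝓔^{(i)}(u_n^{(i)}, u_n^{(i)}) ≤ (1/k) ‖u_n^{(i)}‖²_{L²(m^{(i)})} }, finite for all k, such that 0 ≤ u^{(i)}_{n^{(i)}(k)} ≤ 1 a.e., u^{(i)}_{n^{(i)}(k)} → 1 a.e. as k → ∞, and (1/k) ∏_{i=1}^N ‖u^{(i)}_{n^{(i)}(k)}‖²_{L²(m^{(i)})} → 0 as k → ∞. Then, defining the product form 𝓔(u, u) := Σ_{i=1}^N 𝓔^{(i)}(u^{(i)}, u^{(i)}) ∏_{j ≠ i} ‖u^{(j)}‖²_{L²(m^{(j)})} for u = u^{(1)} ⊗ ⋯ ⊗ u^{(N)}, the sequence v_k := u^{(1)}_{n^{(1)}(k)} ⊗ ⋯ ⊗ u^{(N)}_{n^{(N)}(k)} satisfies 0 ≤ v_k ≤ 1 a.e.,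 v_k → 1 a.e. (with respect to the product measure), and 𝓔(v_k, v_k) → 0 as k → ∞. -/

import Mathlib

/-!
Almost-everywhere statements holding in every coordinate hold jointly for the product
measure, which gives the bounds `0 ≤ v_k ≤ 1` and the convergence `v_k → 1`. For the energy,
the choice of `n⁽ⁱ⁾(k)` gives `𝓔⁽ⁱ⁾(uᵢ, uᵢ) ≤ ‖uᵢ‖² / k`, so each of the `N` summands of
`𝓔(v_k, v_k)` is at most `(1/k) ∏ⱼ ‖uⱼ‖²`, which tends to `0` by assumption.
-/

open MeasureTheory Set Filter

namespace MeasureTheory.Measure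

variable {ι : Type*} [Fintype ι] {α : ι → Type*} [∀ i, MeasurableSpace (α i)]
  {μ : ∀ i, Measure (α i)} [∀ i, SigmaFinite (μ i)]

theorem ae_pi_forall_of_forall_ae {p : ∀ i, α i → Prop} (h : ∀ i, ∀ᵐ y ∂μ i, p i y) :
    ∀ᵐ x ∂Measure.pi μ, ∀ i, p i (x i) :=
  ae_pi_le_pi (eventually_pi h)

theorem ae_pi_prod_mem_unitInterval {f : ∀ i, α i → ℝ}
    (hf : ∀ i, ∀ᵐ y ∂μ i, 0 ≤ f i y ∧ f i y ≤ 1) :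
    ∀ᵐ x ∂Measure.pi μ, 0 ≤ ∏ i, f i (x i) ∧ ∏ i, f i (x i) ≤ 1 := by
  filter_upwards [ae_pi_forall_of_forall_ae hf] with x hx
  exact ⟨Finset.prod_nonneg fun i _ => (hx i).1,
    Finset.prod_le_one (fun i _ => (hx i).1) fun i _ => (hx i).2⟩

theorem ae_pi_tendsto_prod_one {f : ∀ i, ℕ → α i → ℝ}
    (hf : ∀ i, ∀ᵐ y ∂μ i, Tendsto (fun k => f i k y) atTop (nhds 1)) :
    ∀ᵐ x ∂Measure.pi μ, Tendsto (fun k => ∏ i, f i k (x i)) atTop (nhds 1) := by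
  filter_upwards [ae_pi_forall_of_forall_ae hf] with x hx
  simpa using tendsto_finsetProd Finset.univ fun i _ => hx i

end MeasureTheory.Measure

theorem Finset.sum_mul_prod_erase_le {ι R : Type*} [DecidableEq ι] [CommSemiring R]
    [PartialOrder R] [IsOrderedRing R] (s : Finset ι) {Q a : ι → R} {c : R}
    (ha : ∀ j ∈ s, 0 ≤ a j) (hQ : ∀ i ∈ s, Q i ≤ c * a i) :
    ∑ i ∈ s, Q i * ∏ j ∈ s.erase i, a j ≤ s.card • (c * ∏ j ∈ s, a j) := by
  rw [← Finset.sum_const]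
  refine Finset.sum_le_sum fun i hi => ?_
  calc Q i * ∏ j ∈ s.erase i, a j
      ≤ c * a i * ∏ j ∈ s.erase i, a j :=
        mul_le_mul_of_nonneg_right (hQ i hi)
          (Finset.prod_nonneg fun j hj => ha j (mem_of_mem_erase hj))
    _ = c * ∏ j ∈ s, a j := by rw [mul_assoc, Finset.mul_prod_erase s a hi]

theorem tendsto_sum_mul_prod_erase_zero {ι : Type*} [Fintype ι] [DecidableEq ι]
    {Q a : ℕ → ι → ℝ} {c : ℕ → ℝ} (hQ₀ : ∀ k i, 0 ≤ Q k i) (ha : ∀ k j, 0 ≤ a k j)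
    (hQ : ∀ᶠ k in atTop, ∀ i, Q k i ≤ c k * a k i)
    (hlim : Tendsto (fun k => c k * ∏ j, a k j) atTop (nhds 0)) :
    Tendsto (fun k => ∑ i, Q k i * ∏ j ∈ Finset.univ.erase i, a k j) atTop (nhds 0) := by
  have hbound := hlim.const_mul (Fintype.card ι : ℝ)
  rw [mul_zero] at hbound
  refine squeeze_zero' (Eventually.of_forall fun k => ?_) ?_ hbound
  · exact Finset.sum_nonneg fun i _ =>
      mul_nonneg (hQ₀ k i) (Finset.prod_nonneg fun j _ => ha k j)
  · filter_upwards [hQ] with k hk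
    simpa [nsmul_eq_mul] using
      Finset.univ.sum_mul_prod_erase_le (fun j _ => ha k j) fun i _ => hk i

theorem stmt8_general (N : ℕ)
    (E : Fin N → Type*) [∀ i, MeasurableSpace (E i)]
    (m : ∀ i, Measure (E i)) [∀ i, SigmaFinite (m i)]
    (Q : ∀ i, (E i → ℝ) → ℝ) (hQnonneg : ∀ i f, 0 ≤ Q i f)
    (u : ∀ i : Fin N, ℕ → E i → ℝ)
    (nk : Fin N → ℕ → ℕ)
    (hmem : ∀ i, ∀ k : ℕ, 1 ≤ k →
      Q i (u i (nk i k)) ≤ (1 / (k : ℝ)) * ∫ x, (u i (nk i k) x) ^ 2 ∂(m i))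
    (hbd : ∀ i, ∀ k : ℕ, ∀ᵐ x ∂(m i), 0 ≤ u i (nk i k) x ∧ u i (nk i k) x ≤ 1)
    (hlim : ∀ i, ∀ᵐ x ∂(m i), Tendsto (fun k : ℕ => u i (nk i k) x) atTop (nhds 1))
    (hprod : Tendsto (fun k : ℕ => (1 / (k : ℝ)) * ∏ i, ∫ x, (u i (nk i k) x) ^ 2 ∂(m i))
      atTop (nhds 0))
    (v : ℕ → (∀ i, E i) → ℝ)
    (hv : ∀ k x, v k x = ∏ i, u i (nk i k) (x i)) :
    (∀ k : ℕ, ∀ᵐ x ∂(Measure.pi m), 0 ≤ v k x ∧ v k x ≤ 1)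
    ∧ (∀ᵐ x ∂(Measure.pi m), Tendsto (fun k : ℕ => v k x) atTop (nhds 1))
    ∧ Tendsto (fun k : ℕ => ∑ i, Q i (u i (nk i k))
        * ∏ j ∈ Finset.univ.erase i, ∫ x, (u j (nk j k) x) ^ 2 ∂(m j)) atTop (nhds 0) := by
  have hv' : v = fun k x => ∏ i, u i (nk i k) (x i) := funext₂ hv
  subst hv'
  refine ⟨fun k => Measure.ae_pi_prod_mem_unitInterval fun i => hbd i k,
    Measure.ae_pi_tendsto_prod_one hlim, ?_⟩
  exact tendsto_sum_mul_prod_erase_zero (fun k i => hQnonneg _ _)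
    (fun k j => integral_nonneg fun x => sq_nonneg _)
    ((eventually_ge_atTop 1).mono fun k hk i => hmem i k hk) hprod

theorem stmt8 (N : ℕ) (hN : 1 ≤ N)
    (E : Fin N → Type*) [∀ i, MeasurableSpace (E i)]
    (m : ∀ i, Measure (E i)) [∀ i, SigmaFinite (m i)]
    (Q : ∀ i, (E i → ℝ) → ℝ) (hQnonneg : ∀ i f, 0 ≤ Q i f)
    (u : ∀ i : Fin N, ℕ → E i → ℝ)
    (nk : Fin N → ℕ → ℕ)
    (hmem : ∀ i, ∀ k : ℕ, 1 ≤ k →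
      Q i (u i (nk i k)) ≤ (1 / (k : ℝ)) * ∫ x, (u i (nk i k) x) ^ 2 ∂(m i))
    (hmin : ∀ i, ∀ k n : ℕ, 1 ≤ k → n < nk i k →
      ¬ (Q i (u i n) ≤ (1 / (k : ℝ)) * ∫ x, (u i n x) ^ 2 ∂(m i)))
    (hbd : ∀ i, ∀ k : ℕ, ∀ᵐ x ∂(m i), 0 ≤ u i (nk i k) x ∧ u i (nk i k) x ≤ 1)
    (hlim : ∀ i, ∀ᵐ x ∂(m i), Tendsto (fun k : ℕ => u i (nk i k) x) atTop (nhds 1))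
    (hprod : Tendsto (fun k : ℕ => (1 / (k : ℝ)) * ∏ i, ∫ x, (u i (nk i k) x) ^ 2 ∂(m i))
      atTop (nhds 0))
    (v : ℕ → (∀ i, E i) → ℝ)
    (hv : ∀ k x, v k x = ∏ i, u i (nk i k) (x i)) :
    (∀ k : ℕ, ∀ᵐ x ∂(Measure.pi m), 0 ≤ v k x ∧ v k x ≤ 1)
    ∧ (∀ᵐ x ∂(Measure.pi m), Tendsto (fun k : ℕ => v k x) atTop (nhds 1))
    ∧ Tendsto (fun k : ℕ => ∑ i, Q i (u i (nk i k))
        * ∏ j ∈ Finset.univ.erase i, ∫ x, (u j (nk j k) x) ^ 2 ∂(m j)) atTop (nhds 0) :=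
  stmt8_general N E m Q hQnonneg u nk hmem hbd hlim hprod v hv
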